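/- arXiv:1702.02244 — 3 statements merged into one kernel-verified Lean document; each statement's English description precedes it below -/
import Mathlib

section
/- Let μ = 1 and let β, γ be real numbers satisfying 2β² + 2γ² + γ − 3 = 0 and 8β⁴ + (16γ² − 4γ + 3)β² + (γ−1)²(8γ² + 12γ + 15) = 0. Then β = 0 and γ = 1. -/
theorem stmt_1 (μ β γ : ℝ) (hμ : μ = 1)
    (h1 : 2*β^2 + 2*γ^2 + γ - 3 = 0)
    (h2 : 8*β^4 + (16*γ^2 - 4*γ + 3)*β^2 + (γ - 1)^2*(8*γ^2 + 12*γ + 15) = 0) :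
    β = 0 ∧ γ = 1 := by
  have hγ : γ = 1 := by
    linear_combination (-2/75)*h2 +
      (2/75)*(4*β^2 + (16*γ^2-4*γ+3)/2 + 2*(3-γ-2*γ^2))*h1
  subst hγ
  have : β^2 = 0 := by linarith
  exact ⟨pow_eq_zero_iff (by norm_num) |>.mp this, rfl⟩
end

section
/- There exist no real numbers β, γ with β ≠ 0 satisfying both 2β² + 2γ² + γ − 3 = 0 and 8β⁴ + (16γ² − 4γ + 3)β² + (γ−1)²(8γ² + 12γ + 15) = 0. -/
theorem stmt_2 :
    ¬ ∃ β γ : ℝ, β ≠ 0 ∧ 2*β^2 + 2*γ^2 + γ - 3 = 0 ∧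
      8*β^4 + (16*γ^2 - 4*γ + 3)*β^2 + (γ - 1)^2*(8*γ^2 + 12*γ + 15) = 0 := by
  rintro ⟨β, γ, hβ, h1, h2⟩
  have hγ : γ = 1 := by
    linear_combination ((4*β^2 + (8*γ^2 - 8*γ + 15)/2) * h1 - h2) / 37.5
  subst hγ
  have : β ^ 2 = 0 := by linarith
  exact hβ (pow_eq_zero_iff (n := 2) (by norm_num) |>.mp this)
end

section
/- Let M be a 3-dimensional Riemannian manifold. For each point p, the maximum Ricci curvature Ric̄(p) = max{S(X,X) : X ∈ T_pM, ‖X‖=1} equals the δ-invariant δ(2)(p) = (1/2)τ(p) − min{K(π) : π a plane in T_pM}, where S is the Ricci tensor, τ the scalar curvature, and K the sectional curvature. -/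
/-!
In an orthonormal frame `(e₀, e₁, e₂)` of a 3-dimensional space, `Ric(e₀) = K₀₁ + K₀₂` while
`τ / 2 = K₀₁ + K₀₂ + K₁₂`, hence `Ric(e₀) = τ / 2 - K₁₂`. Both sides may be computed in any
orthonormal frame, since the trace of a bilinear form does not depend on it. Every unit vector
starts an orthonormal frame and every orthonormal pair completes one, so the Ricci curvatures of
unit vectors are exactly the numbers `τ / 2 - K(π)`. As `Ric` is a quadratic form, it is bounded
on the compact unit sphere, so both extrema are genuine and the infimum of `K` turns into the
supremum of `Ric`.
-/

open scoped RealInnerProductSpace Pointwise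

open Module Set

section Trace

variable {E : Type*} [NormedAddCommGroup E] [InnerProductSpace ℝ E] [FiniteDimensional ℝ E]

theorem LinearMap.sum_apply_orthonormalBasis_eq_trace {ι : Type*} [Fintype ι]
    (T : E →ₗ[ℝ] E →ₗ[ℝ] ℝ) (b : OrthonormalBasis ι ℝ E) :
    ∑ i, T (b i) (b i) = LinearMap.trace ℝ E
      (InnerProductSpace.continuousLinearMapOfBilin T.toContinuousBilinearMap) := by
  rw [LinearMap.trace_eq_sum_inner _ b]
  refine Finset.sum_congr rfl fun i _ => ?_
  rw [ContinuousLinearMap.coe_coe, real_inner_comm,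
    InnerProductSpace.continuousLinearMapOfBilin_apply, LinearMap.toContinuousBilinearMap_apply]

theorem LinearMap.sum_apply_orthonormalBasis_eq {ι ι' : Type*} [Fintype ι] [Fintype ι']
    (T : E →ₗ[ℝ] E →ₗ[ℝ] ℝ) (b : OrthonormalBasis ι ℝ E) (c : OrthonormalBasis ι' ℝ E) :
    ∑ i, T (b i) (b i) = ∑ j, T (c j) (c j) := by
  rw [T.sum_apply_orthonormalBasis_eq_trace b, T.sum_apply_orthonormalBasis_eq_trace c]

theorem LinearMap.bddAbove_apply_self_image_sphere (T : E →ₗ[ℝ] E →ₗ[ℝ] ℝ) :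
    BddAbove ((fun x => T x x) '' Metric.sphere 0 1) :=
  (isCompact_sphere 0 1).bddAbove_image <|
    (T.toContinuousBilinearMap.continuous₂.comp (continuous_id.prodMk continuous_id)).continuousOn

end Trace

section FinThree

variable {E : Type*} [NormedAddCommGroup E] [InnerProductSpace ℝ E]

theorem exists_orthonormalBasis_fin_three_apply_zero (hE : finrank ℝ E = 3) {X : E}
    (hX : ‖X‖ = 1) : ∃ b : OrthonormalBasis (Fin 3) ℝ E, b 0 = X := by
  have hv : Orthonormal ℝ (({0} : Set (Fin 3)).domRestrict fun _ => X) := by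
    refine ⟨fun _ => hX, ?_⟩
    rintro ⟨i, rfl⟩ ⟨j, rfl⟩ hij
    exact absurd rfl hij
  have := Module.finite_of_finrank_eq_succ hE
  obtain ⟨b, hb⟩ := hv.exists_orthonormalBasis_extension_of_card_eq (by simpa using hE)
  exact ⟨b, hb 0 rfl⟩

theorem exists_orthonormalBasis_fin_three_apply_one_two (hE : finrank ℝ E = 3) {X Y : E}
    (hX : ‖X‖ = 1) (hY : ‖Y‖ = 1) (hXY : ⟪X, Y⟫ = 0) :
    ∃ b : OrthonormalBasis (Fin 3) ℝ E, b 1 = X ∧ b 2 = Y := by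
  have hv : Orthonormal ℝ (({1, 2} : Set (Fin 3)).domRestrict ![0, X, Y]) := by
    rw [orthonormal_iff_ite]
    rintro ⟨i, hi⟩ ⟨j, hj⟩
    simp only [mem_insert_iff, mem_singleton_iff] at hi hj
    rcases hi with rfl | rfl <;> rcases hj with rfl | rfl <;>
      simp [hX, hY, hXY, real_inner_comm X Y]
  have := Module.finite_of_finrank_eq_succ hE
  obtain ⟨b, hb⟩ := hv.exists_orthonormalBasis_extension_of_card_eq (by simpa using hE)
  exact ⟨b, hb 1 (by simp), hb 2 (by simp)⟩

end FinThree

namespace CurvatureTensor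

variable {E : Type*} [NormedAddCommGroup E] [InnerProductSpace ℝ E]
  (R : E →ₗ[ℝ] E →ₗ[ℝ] E →ₗ[ℝ] E →ₗ[ℝ] ℝ) {ι ι' : Type*} [Fintype ι] [Fintype ι']

noncomputable def ricci (b : OrthonormalBasis ι ℝ E) (X : E) : ℝ :=
  ∑ i, R (b i) X X (b i)

noncomputable def scalar (b : OrthonormalBasis ι ℝ E) : ℝ :=
  ∑ j, ricci R b (b j)

def sectionalCurvatures : Set ℝ :=
  {k | ∃ X Y : E, ‖X‖ = 1 ∧ ‖Y‖ = 1 ∧ ⟪X, Y⟫ = 0 ∧ k = R X Y Y X}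

section FiniteDimensional

variable [FiniteDimensional ℝ E]

theorem ricci_eq (b : OrthonormalBasis ι ℝ E) (c : OrthonormalBasis ι' ℝ E) :
    ricci R b = ricci R c :=
  funext fun X => ((R.flip X).flip X).sum_apply_orthonormalBasis_eq b c

theorem scalar_eq (hpair : ∀ X Y Z W, R X Y Z W = R Z W X Y)
    (b : OrthonormalBasis ι ℝ E) (c : OrthonormalBasis ι' ℝ E) :
    scalar R b = scalar R c :=
  calc scalar R b
      = ∑ j, ∑ i, R (c i) (b j) (b j) (c i) := by rw [scalar, ricci_eq R b c]; rfl
    _ = ∑ i, ∑ j, R (b j) (c i) (c i) (b j) := by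
        rw [Finset.sum_comm]; simp_rw [hpair (c _)]
    _ = scalar R c := by rw [scalar, ← ricci_eq R b c]; rfl

theorem bddAbove_ricci_image_sphere (b : OrthonormalBasis ι ℝ E) :
    BddAbove (ricci R b '' Metric.sphere 0 1) := by
  convert (∑ i, (R (b i)).compr₂ (LinearMap.applyₗ (b i))).bddAbove_apply_self_image_sphere
    using 3
  simp [ricci]

end FiniteDimensional

theorem ricci_zero_fin_three (hskew : ∀ X Y Z W, R X Y Z W = -R Y X Z W)
    (hpair : ∀ X Y Z W, R X Y Z W = R Z W X Y) (b : OrthonormalBasis (Fin 3) ℝ E) :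
    ricci R b (b 0) = scalar R b / 2 - R (b 1) (b 2) (b 2) (b 1) := by
  have hdiag : ∀ X Z W, R X X Z W = 0 := fun X Z W => by linarith [hskew X X Z W]
  simp only [scalar, ricci, Fin.sum_univ_three, hdiag]
  linarith [hpair (b 0) (b 1) (b 1) (b 0), hpair (b 0) (b 2) (b 2) (b 0),
    hpair (b 1) (b 2) (b 2) (b 1)]

theorem ricci_image_sphere_eq_fin_three (hE : finrank ℝ E = 3)
    (hskew : ∀ X Y Z W, R X Y Z W = -R Y X Z W) (hpair : ∀ X Y Z W, R X Y Z W = R Z W X Y)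
    (c : OrthonormalBasis ι ℝ E) :
    ricci R c '' Metric.sphere 0 1 = {scalar R c / 2} - sectionalCurvatures R := by
  have := Module.finite_of_finrank_eq_succ hE
  have hframe (b : OrthonormalBasis (Fin 3) ℝ E) :
      ricci R c (b 0) = scalar R c / 2 - R (b 1) (b 2) (b 2) (b 1) := by
    rw [ricci_eq R c b, scalar_eq R hpair c b, ricci_zero_fin_three R hskew hpair b]
  ext r
  constructor
  · rintro ⟨X, hX, rfl⟩
    obtain ⟨b, rfl⟩ := exists_orthonormalBasis_fin_three_apply_zero hE (by simpa using hX)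
    exact ⟨_, rfl, _, ⟨b 1, b 2, b.norm_eq_one 1, b.norm_eq_one 2,
      b.inner_eq_zero (by decide), rfl⟩, (hframe b).symm⟩
  · rintro ⟨_, rfl, _, ⟨X, Y, hX, hY, hXY, rfl⟩, rfl⟩
    obtain ⟨b, rfl, rfl⟩ := exists_orthonormalBasis_fin_three_apply_one_two hE hX hY hXY
    exact ⟨b 0, by simp, hframe b⟩

theorem csSup_ricci_image_sphere_fin_three (hE : finrank ℝ E = 3)
    (hskew : ∀ X Y Z W, R X Y Z W = -R Y X Z W) (hpair : ∀ X Y Z W, R X Y Z W = R Z W X Y)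
    (c : OrthonormalBasis ι ℝ E) :
    sSup (ricci R c '' Metric.sphere 0 1) = scalar R c / 2 - sInf (sectionalCurvatures R) := by
  have := Module.finite_of_finrank_eq_succ hE
  have himage := ricci_image_sphere_eq_fin_three R hE hskew hpair c
  have hne : (sectionalCurvatures R).Nonempty := by
    let b := (stdOrthonormalBasis ℝ E).reindex (finCongr hE)
    exact ⟨_, b 0, b 1, b.norm_eq_one 0, b.norm_eq_one 1, b.inner_eq_zero (by decide), rfl⟩
  have hbdd : BddBelow (sectionalCurvatures R) := by
    obtain ⟨M, hM⟩ := bddAbove_ricci_image_sphere R c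
    refine ⟨scalar R c / 2 - M, fun k hk => ?_⟩
    have := hM (himage ▸ sub_mem_sub (mem_singleton _) hk)
    linarith
  rw [himage, csSup_sub (singleton_nonempty _) bddAbove_singleton hne hbdd, csSup_singleton]

end CurvatureTensor

open CurvatureTensor

theorem stmt_15_general
    (R : EuclideanSpace ℝ (Fin 3) →ₗ[ℝ] EuclideanSpace ℝ (Fin 3) →ₗ[ℝ]
         EuclideanSpace ℝ (Fin 3) →ₗ[ℝ] EuclideanSpace ℝ (Fin 3) →ₗ[ℝ] ℝ)
    (hskew₁ : ∀ X Y Z W, R X Y Z W = -R Y X Z W)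
    (hpair : ∀ X Y Z W, R X Y Z W = R Z W X Y)
    (S : EuclideanSpace ℝ (Fin 3) → ℝ)
    (hS : ∀ X, S X = ∑ i : Fin 3,
      R (EuclideanSpace.basisFun (Fin 3) ℝ i) X X (EuclideanSpace.basisFun (Fin 3) ℝ i))
    (τ : ℝ)
    (hτ : τ = ∑ i : Fin 3, S (EuclideanSpace.basisFun (Fin 3) ℝ i)) :
    sSup {r : ℝ | ∃ X : EuclideanSpace ℝ (Fin 3), ‖X‖ = 1 ∧ r = S X} =
      τ / 2 - sInf {k : ℝ | ∃ X Y : EuclideanSpace ℝ (Fin 3),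
        ‖X‖ = 1 ∧ ‖Y‖ = 1 ∧ ⟪X, Y⟫ = 0 ∧ k = R X Y Y X} := by
  set e := EuclideanSpace.basisFun (Fin 3) ℝ
  have hricci : S = ricci R e := funext hS
  have hscalar : τ = scalar R e := by rw [hτ, hricci]; rfl
  have hA : {r : ℝ | ∃ X : EuclideanSpace ℝ (Fin 3), ‖X‖ = 1 ∧ r = S X} =
      ricci R e '' Metric.sphere 0 1 := by
    ext r
    simp [hricci, eq_comm]
  rw [hA, hscalar, csSup_ricci_image_sphere_fin_three R finrank_euclideanSpace_fin hskew₁ hpair e]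
  rfl

/-- For a 3-dimensional Riemannian manifold (modelled pointwise by an algebraic
curvature tensor `R` on the 3-dimensional Euclidean tangent space), the maximum
Ricci curvature equals the δ-invariant δ(2): `max S(X,X) = τ/2 − min K(π)`. -/
theorem stmt_15
    (R : EuclideanSpace ℝ (Fin 3) →ₗ[ℝ] EuclideanSpace ℝ (Fin 3) →ₗ[ℝ]
         EuclideanSpace ℝ (Fin 3) →ₗ[ℝ] EuclideanSpace ℝ (Fin 3) →ₗ[ℝ] ℝ)
    (hskew₁ : ∀ X Y Z W, R X Y Z W = -R Y X Z W)
    (hskew₂ : ∀ X Y Z W, R X Y Z W = -R X Y W Z)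
    (hpair : ∀ X Y Z W, R X Y Z W = R Z W X Y)
    (hbianchi : ∀ X Y Z W, R X Y Z W + R Y Z X W + R Z X Y W = 0)
    (S : EuclideanSpace ℝ (Fin 3) → ℝ)
    (hS : ∀ X, S X = ∑ i : Fin 3,
      R (EuclideanSpace.basisFun (Fin 3) ℝ i) X X (EuclideanSpace.basisFun (Fin 3) ℝ i))
    (τ : ℝ)
    (hτ : τ = ∑ i : Fin 3, S (EuclideanSpace.basisFun (Fin 3) ℝ i)) :
    sSup {r : ℝ | ∃ X : EuclideanSpace ℝ (Fin 3), ‖X‖ = 1 ∧ r = S X} =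
      τ / 2 - sInf {k : ℝ | ∃ X Y : EuclideanSpace ℝ (Fin 3),
        ‖X‖ = 1 ∧ ‖Y‖ = 1 ∧ ⟪X, Y⟫ = 0 ∧ k = R X Y Y X} :=
  stmt_15_general R hskew₁ hpair S hS τ hτ
end
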